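/- For every real x, the Euler polynomial matrix 𝓔(x + 1/2) and its inverse can be factorized by summation matrices as 𝓔(x + 1/2) = G_n[x]·G_{n−1}[x]·⋯·G_1[x]·𝔈 and [𝓔(x + 1/2)]^{−1} = 𝓓·G_n[−x]·G_{n−1}[−x]·⋯·G_1[−x]. In particular, 𝓔 = G_n[−1/2]·⋯·G_1[−1/2]·𝔈 and 𝓔^{−1} = 𝓓·G_n[1/2]·⋯·G_1[1/2]. -/

import Mathlib

noncomputable section

/-- `Eu x k` is the Euler polynomial `E_k(x)`, characterized by the generating function
`(2/(e^z+1)) e^{xz} = Σ_k E_k(x) z^k / k!` for `|z| < π`. -/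
def IsEulerFamily (Eu : ℝ → ℕ → ℝ) : Prop :=
  ∀ x z : ℝ, |z| < Real.pi →
    HasSum (fun k : ℕ => Eu x k * z ^ k / (Nat.factorial k : ℝ))
      (2 / (Real.exp z + 1) * Real.exp (x * z))

/-- The `(n+1)×(n+1)` Euler polynomial matrix `𝓔(x)`, with `(i,j)` entry
`C(i,j) E_{i-j}(x)` (which is `0` for `j > i` since then `C(i,j) = 0`). -/
def eulerMatrix (Eu : ℝ → ℕ → ℝ) (n : ℕ) (x : ℝ) :
    Matrix (Fin (n + 1)) (Fin (n + 1)) ℝ :=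
  Matrix.of fun i j => (Nat.choose (i : ℕ) (j : ℕ) : ℝ) * Eu x ((i : ℕ) - (j : ℕ))

/-- The generalized Pascal matrix of the first kind `P[x]`. -/
def pascalMatrix (n : ℕ) (x : ℝ) : Matrix (Fin (n + 1)) (Fin (n + 1)) ℝ :=
  Matrix.of fun i j => (Nat.choose (i : ℕ) (j : ℕ) : ℝ) * x ^ ((i : ℕ) - (j : ℕ))

/-- The matrix `𝓓`, with `(i,j)` entry `(1+(-1)^(i-j)) C(i,j) 2^(j-i-1)`
(which is `0` for `j > i` since then `C(i,j) = 0`). -/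
def Dmatrix (n : ℕ) : Matrix (Fin (n + 1)) (Fin (n + 1)) ℝ :=
  Matrix.of fun i j =>
    (1 + (-1 : ℝ) ^ ((i : ℤ) - (j : ℤ))) * (Nat.choose (i : ℕ) (j : ℕ) : ℝ) *
      (2 : ℝ) ^ ((j : ℤ) - (i : ℤ) - 1)

/-- The summation matrix `G_k[x]` of order `n+1`: the block diagonal matrix
`diag(I_{n-k}, S_k[x])`, where `S_k[x]` is the `(k+1)×(k+1)` lower triangular matrix with
`(i,j)` entry `x^(i-j)` for `i ≥ j`.  (For `k = n` this is just `S_n[x]`.) -/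
def Gmatrix (n k : ℕ) (x : ℝ) : Matrix (Fin (n + 1)) (Fin (n + 1)) ℝ :=
  Matrix.of fun i j =>
    if n - k ≤ (i : ℕ) ∧ n - k ≤ (j : ℕ) then
      (if (j : ℕ) ≤ (i : ℕ) then x ^ ((i : ℕ) - (j : ℕ)) else 0)
    else (if i = j then 1 else 0)

/-- The ordered product `G_n[x] · G_{n-1}[x] · ⋯ · G_1[x]`. -/
def Gprod (n : ℕ) (x : ℝ) : Matrix (Fin (n + 1)) (Fin (n + 1)) ℝ :=
  (List.ofFn fun m : Fin n => Gmatrix n (n - (m : ℕ)) x).prod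

/-!
Every matrix in the statement is a binomial matrix `(C(i,j) a_{i-j})_{i,j}` of a sequence `a`, and
the product of two binomial matrices is the binomial matrix of the binomial convolution of the
sequences, whose exponential generating function is the product of theirs. The EGF of `E_k(x)` is
`2 e^{xz}/(e^z+1)`, that of `x^k` is `e^{xz}` and that of the entries of `𝓓` is `cosh(z/2)`; hence
`𝓔(x+y) = P[x] 𝓔(y)` for the Pascal matrix `P[x]`, and `𝓔(1/2) 𝓓 = I` because
`2 e^{z/2} cosh(z/2) = e^z + 1`. Independently, `G_n[x] ⋯ G_1[x] = P[x]`: by the hockey-stick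
identity, `G_{k+1}[x] · diag(I_{n-k}, P_k[x]) = diag(I_{n-k-1}, P_{k+1}[x])`.
-/

open Finset Nat

def binomConv (a b : ℕ → ℝ) (m : ℕ) : ℝ :=
  ∑ k ∈ range (m + 1), (m.choose k : ℝ) * a k * b (m - k)

lemma binomConv_comm (a b : ℕ → ℝ) : binomConv a b = binomConv b a := by
  funext m
  rw [binomConv, binomConv, ← sum_range_reflect]
  refine sum_congr rfl fun k hk => ?_
  have hk : k ≤ m := Nat.lt_succ_iff.mp (mem_range.mp hk)
  rw [Nat.add_sub_cancel, Nat.sub_sub_self hk, Nat.choose_symm hk]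
  ring

lemma binomConv_pow (x y : ℝ) : binomConv (x ^ ·) (y ^ ·) = ((x + y) ^ ·) := by
  funext m
  rw [binomConv, add_pow]
  exact sum_congr rfl fun k _ => by ring

lemma sum_Icc_eq_sum_range {M : Type*} [AddCommMonoid M] (f : ℕ → M) {j i : ℕ} (h : j ≤ i) :
    ∑ t ∈ Icc j i, f t = ∑ k ∈ range (i - j + 1), f (j + k) := by
  rw [← Ico_add_one_right_eq_Icc, sum_Ico_eq_sum_range, Nat.sub_add_comm h]

def lowerMatrix (n : ℕ) (c : ℕ → ℕ → ℝ) : Matrix (Fin (n + 1)) (Fin (n + 1)) ℝ :=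
  Matrix.of fun i j => if (j : ℕ) ≤ i then c i j else 0

lemma lowerMatrix_mul (n : ℕ) (c d : ℕ → ℕ → ℝ) :
    lowerMatrix n c * lowerMatrix n d = lowerMatrix n fun i j => ∑ t ∈ Icc j i, c i t * d t j := by
  ext i j
  simp only [Matrix.mul_apply, lowerMatrix, Matrix.of_apply]
  rw [Fin.sum_univ_eq_sum_range
    (fun t => (if t ≤ (i : ℕ) then c i t else 0) * (if (j : ℕ) ≤ t then d t j else 0))]
  have hsub : Icc (j : ℕ) i ⊆ range (n + 1) := fun t ht =>
    mem_range.mpr (Nat.lt_succ_of_le ((mem_Icc.mp ht).2.trans i.is_le))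
  rw [← sum_subset hsub fun t _ ht => ?_]
  · split_ifs with hji
    · exact sum_congr rfl fun t ht => by rw [if_pos (mem_Icc.mp ht).2, if_pos (mem_Icc.mp ht).1]
    · rw [Icc_eq_empty hji, sum_empty]
  · rw [mem_Icc, not_and_or, not_le, not_le] at ht
    rcases ht with ht | ht
    · rw [if_neg ht.not_ge, mul_zero]
    · rw [if_neg ht.not_ge, zero_mul]

def binomialMatrix (n : ℕ) (a : ℕ → ℝ) : Matrix (Fin (n + 1)) (Fin (n + 1)) ℝ :=
  Matrix.of fun i j => ((i : ℕ).choose j : ℝ) * a (i - j)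

lemma binomialMatrix_eq_lowerMatrix (n : ℕ) (a : ℕ → ℝ) :
    binomialMatrix n a = lowerMatrix n fun i j => (i.choose j : ℝ) * a (i - j) := by
  ext i j
  simp only [binomialMatrix, lowerMatrix, Matrix.of_apply]
  split_ifs with h
  · rfl
  · rw [Nat.choose_eq_zero_of_lt (not_le.mp h), Nat.cast_zero, zero_mul]

lemma sum_Icc_choose_mul_choose (a b : ℕ → ℝ) (i j : ℕ) :
    ∑ t ∈ Icc j i, (i.choose t : ℝ) * a (i - t) * ((t.choose j : ℝ) * b (t - j)) =
      (i.choose j : ℝ) * binomConv b a (i - j) := by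
  rcases lt_or_ge i j with h | h
  · rw [Icc_eq_empty_of_lt h, sum_empty, Nat.choose_eq_zero_of_lt h, Nat.cast_zero, zero_mul]
  rw [sum_Icc_eq_sum_range _ h, binomConv, mul_sum]
  refine sum_congr rfl fun k hk => ?_
  have hk : k ≤ i - j := Nat.lt_succ_iff.mp (mem_range.mp hk)
  have hc : (i.choose (j + k) : ℝ) * (j + k).choose j = i.choose j * (i - j).choose k := by
    have := Nat.choose_mul (n := i) (k := j + k) (s := j) (Nat.le_add_right j k)
    rw [Nat.add_sub_cancel_left] at this
    exact_mod_cast this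
  rw [Nat.add_sub_cancel_left, show i - (j + k) = i - j - k by omega]
  linear_combination (a (i - j - k) * b k) * hc

lemma binomialMatrix_mul (n : ℕ) (a b : ℕ → ℝ) :
    binomialMatrix n a * binomialMatrix n b = binomialMatrix n (binomConv a b) := by
  simp only [binomialMatrix_eq_lowerMatrix, lowerMatrix_mul, sum_Icc_choose_mul_choose,
    binomConv_comm b a]

lemma binomialMatrix_single (n : ℕ) : binomialMatrix n (Pi.single 0 1) = 1 := by
  ext i j
  simp only [binomialMatrix, Matrix.of_apply, Matrix.one_apply, Pi.single_apply, Fin.ext_iff]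
  split_ifs with h0 hij hij
  · rw [hij, Nat.choose_self, Nat.cast_one, mul_one]
  · rw [Nat.choose_eq_zero_of_lt (by omega), Nat.cast_zero, zero_mul]
  · omega
  · rw [mul_zero]

def HasEGF (a : ℕ → ℝ) (f : ℝ → ℝ) : Prop :=
  ∀ z : ℝ, |z| < 1 → HasSum (fun k => a k * z ^ k / k !) (f z)

def egfSeries (a : ℕ → ℝ) : FormalMultilinearSeries ℝ ℝ ℝ :=
  FormalMultilinearSeries.ofScalars ℝ fun k => a k / k !

lemma egfSeries_apply (a : ℕ → ℝ) (k : ℕ) (z : ℝ) :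
    egfSeries a k (fun _ => z) = a k * z ^ k / k ! := by
  rw [egfSeries, FormalMultilinearSeries.ofScalars_apply_eq, smul_eq_mul]
  ring

namespace HasEGF

variable {a b : ℕ → ℝ} {f g : ℝ → ℝ}

lemma one_le_radius (h : HasEGF a f) : 1 ≤ (egfSeries a).radius := by
  refine ENNReal.le_of_forall_nnreal_lt fun r hr => (egfSeries a).le_radius_of_tendsto (l := 0) ?_
  have hr : |(r : ℝ)| < 1 := by rw [NNReal.abs_eq]; exact_mod_cast hr
  have hterms := (h r hr).summable.tendsto_atTop_zero.norm
  rw [norm_zero] at hterms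
  refine hterms.congr fun k => ?_
  rw [egfSeries, FormalMultilinearSeries.ofScalars_norm, norm_div, norm_mul, norm_pow,
    NNReal.norm_eq, norm_div]
  ring

lemma hasFPowerSeriesOnBall (h : HasEGF a f) : HasFPowerSeriesOnBall f (egfSeries a) 0 1 where
  r_le := h.one_le_radius
  r_pos := one_pos
  hasSum {z} hz := by
    rw [mem_eball_zero_iff, ← ofReal_norm, ENNReal.ofReal_lt_one, Real.norm_eq_abs] at hz
    simpa only [egfSeries_apply, zero_add] using h z hz

lemma summable_norm (h : HasEGF a f) {z : ℝ} (hz : |z| < 1) :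
    Summable fun k => ‖a k * z ^ k / (k ! : ℝ)‖ := by
  have hz' : z ∈ Metric.eball 0 (egfSeries a).radius := by
    rw [← Real.norm_eq_abs, ← ENNReal.ofReal_lt_one, ofReal_norm] at hz
    exact mem_eball_zero_iff.mpr (hz.trans_le h.one_le_radius)
  simpa only [egfSeries_apply] using (egfSeries a).summable_norm_apply hz'

lemma unique (ha : HasEGF a f) (hb : HasEGF b g) (hfg : ∀ z, f z = g z) : a = b := by
  rw [show f = g from funext hfg] at ha
  have hseries := ha.hasFPowerSeriesOnBall.hasFPowerSeriesAt.eq_formalMultilinearSeries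
    hb.hasFPowerSeriesOnBall.hasFPowerSeriesAt
  funext k
  have hk := congrFun (FormalMultilinearSeries.ofScalars_series_injective ℝ ℝ hseries) k
  rwa [div_left_inj' (by positivity)] at hk

lemma mul (ha : HasEGF a f) (hb : HasEGF b g) : HasEGF (binomConv a b) fun z => f z * g z := by
  intro z hz
  have hprod := hasSum_sum_range_mul_of_summable_norm (ha.summable_norm hz) (hb.summable_norm hz)
  rw [(ha z hz).tsum_eq, (hb z hz).tsum_eq] at hprod
  refine hprod.congr_fun fun m => ?_
  rw [binomConv, sum_mul, sum_div]
  refine sum_congr rfl fun k hk => ?_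
  have hk : k ≤ m := Nat.lt_succ_iff.mp (mem_range.mp hk)
  rw [Nat.cast_choose ℝ hk, ← Nat.sub_add_cancel hk, pow_add, Nat.add_sub_cancel]
  field_simp

end HasEGF

lemma hasEGF_pow (y : ℝ) : HasEGF (y ^ ·) fun z => Real.exp (y * z) := fun z _ => by
  simpa only [mul_pow, Real.exp_eq_exp_ℝ] using NormedSpace.expSeries_div_hasSum_exp (y * z)

lemma hasEGF_single : HasEGF (Pi.single 0 1) fun _ => 1 := fun z _ => by
  convert hasSum_pi_single 0 (1 : ℝ) using 1
  funext k
  rcases k with _ | k <;> simp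

def coshHalfCoeff (k : ℕ) : ℝ := ((1 / 2) ^ k + (-(1 / 2)) ^ k) / 2

lemma hasEGF_coshHalfCoeff : HasEGF coshHalfCoeff fun z => Real.cosh (z / 2) := fun z hz => by
  have hsum := ((hasEGF_pow (1 / 2) z hz).add (hasEGF_pow (-(1 / 2)) z hz)).div_const 2
  beta_reduce
  rw [Real.cosh_eq, show z / 2 = 1 / 2 * z by ring, ← neg_mul]
  exact hsum.congr_fun fun k => by simp only [coshHalfCoeff]; ring

lemma eulerMatrix_eq_binomialMatrix (Eu : ℝ → ℕ → ℝ) (n : ℕ) (x : ℝ) :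
    eulerMatrix Eu n x = binomialMatrix n (Eu x) := rfl

lemma pascalMatrix_eq_binomialMatrix (n : ℕ) (x : ℝ) :
    pascalMatrix n x = binomialMatrix n (x ^ ·) := rfl

lemma pascalMatrix_mul (n : ℕ) (x y : ℝ) :
    pascalMatrix n x * pascalMatrix n y = pascalMatrix n (x + y) := by
  rw [pascalMatrix_eq_binomialMatrix, pascalMatrix_eq_binomialMatrix, binomialMatrix_mul,
    binomConv_pow, pascalMatrix_eq_binomialMatrix]

lemma pascalMatrix_zero (n : ℕ) : pascalMatrix n 0 = 1 := by
  rw [pascalMatrix_eq_binomialMatrix, ← binomialMatrix_single]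
  congr 1
  funext m
  rcases m with _ | m <;> simp

lemma Dmatrix_eq_binomialMatrix (n : ℕ) : Dmatrix n = binomialMatrix n coshHalfCoeff := by
  ext i j
  simp only [Dmatrix, binomialMatrix, coshHalfCoeff, Matrix.of_apply]
  rcases lt_or_ge (i : ℕ) j with h | h
  · rw [Nat.choose_eq_zero_of_lt h]
    ring
  obtain ⟨m, hm⟩ := Nat.exists_eq_add_of_le h
  rw [hm, Nat.add_sub_cancel_left]
  push_cast
  rw [show (j : ℤ) + m - j = m by ring,
    show (j : ℤ) - (j + m) - 1 = -((m + 1 : ℕ) : ℤ) by push_cast; ring,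
    zpow_natCast, zpow_neg, zpow_natCast, neg_pow (1 / 2 : ℝ), one_div, inv_pow]
  ring

namespace IsEulerFamily

variable {Eu : ℝ → ℕ → ℝ}

lemma hasEGF (hEu : IsEulerFamily Eu) (x : ℝ) :
    HasEGF (Eu x) fun z => 2 / (Real.exp z + 1) * Real.exp (x * z) := fun z hz =>
  hEu x z (hz.trans (by linarith [Real.pi_gt_three]))

lemma apply_add (hEu : IsEulerFamily Eu) (x y : ℝ) : Eu (x + y) = binomConv (x ^ ·) (Eu y) :=
  (hEu.hasEGF (x + y)).unique ((hasEGF_pow x).mul (hEu.hasEGF y)) fun z => by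
    rw [add_mul, Real.exp_add]
    ring

lemma binomConv_half_coshHalfCoeff (hEu : IsEulerFamily Eu) :
    binomConv (Eu (1 / 2)) coshHalfCoeff = Pi.single 0 1 :=
  ((hEu.hasEGF (1 / 2)).mul hasEGF_coshHalfCoeff).unique hasEGF_single fun z => by
    have hexp : Real.exp z = Real.exp (z / 2) * Real.exp (z / 2) := by
      rw [← Real.exp_add, add_halves]
    rw [Real.cosh_eq, Real.exp_neg, hexp, one_div_mul_eq_div]
    field_simp

lemma eulerMatrix_add (hEu : IsEulerFamily Eu) (n : ℕ) (x y : ℝ) :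
    eulerMatrix Eu n (x + y) = pascalMatrix n x * eulerMatrix Eu n y := by
  rw [eulerMatrix_eq_binomialMatrix, eulerMatrix_eq_binomialMatrix, pascalMatrix_eq_binomialMatrix,
    binomialMatrix_mul, hEu.apply_add]

lemma eulerMatrix_half_mul_Dmatrix (hEu : IsEulerFamily Eu) (n : ℕ) :
    eulerMatrix Eu n (1 / 2) * Dmatrix n = 1 := by
  rw [eulerMatrix_eq_binomialMatrix, Dmatrix_eq_binomialMatrix, binomialMatrix_mul,
    hEu.binomConv_half_coshHalfCoeff, binomialMatrix_single]

end IsEulerFamily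

/-- With `a = n - k`, the entries of `G_k[x]` are `summationCoeff a i j * x ^ (i - j)`. -/
def summationCoeff (a i j : ℕ) : ℝ := if a ≤ j ∨ i = j then 1 else 0

def blockPascalCoeff (a i j : ℕ) : ℝ :=
  if a ≤ j then ((i - a).choose (j - a) : ℝ) else if i = j then 1 else 0

lemma Gmatrix_eq_lowerMatrix (n k : ℕ) (x : ℝ) :
    Gmatrix n k x = lowerMatrix n fun i j => summationCoeff (n - k) i j * x ^ (i - j) := by
  ext i j
  simp only [Gmatrix, lowerMatrix, summationCoeff, Matrix.of_apply, Fin.ext_iff]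
  split_ifs <;> first | omega | simp_all

lemma sum_summationCoeff_mul_blockPascalCoeff (a : ℕ) {i j : ℕ} (h : j ≤ i) :
    ∑ t ∈ Icc j i, summationCoeff a i t * blockPascalCoeff (a + 1) t j = blockPascalCoeff a i j := by
  by_cases hj : a + 1 ≤ j
  · have hterm : ∀ t ∈ Icc j i, summationCoeff a i t * blockPascalCoeff (a + 1) t j =
        ((t - (a + 1)).choose (j - (a + 1)) : ℕ) := fun t ht => by
      have hjt := (mem_Icc.mp ht).1
      rw [summationCoeff, if_pos (Or.inl (by omega)), blockPascalCoeff, if_pos hj, one_mul]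
    rw [sum_congr rfl hterm, ← Nat.cast_sum, sum_Icc_eq_sum_range _ h, blockPascalCoeff,
      if_pos (by omega)]
    refine congrArg Nat.cast ((sum_congr rfl fun k _ => ?_).trans
      ((Nat.sum_range_add_choose (i - j) (j - (a + 1))).trans ?_))
    · congr 1; omega
    · congr 1 <;> omega
  · rw [sum_eq_single_of_mem j (left_mem_Icc.mpr h) fun t ht htj => ?_]
    · rw [blockPascalCoeff, if_neg hj, if_pos rfl, mul_one, summationCoeff, blockPascalCoeff]
      by_cases ha : a ≤ j
      · rw [if_pos (Or.inl ha), if_pos ha, show j - a = 0 by omega, Nat.choose_zero_right,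
          Nat.cast_one]
      · simp only [ha, false_or, if_false]
    · rw [blockPascalCoeff, if_neg hj, if_neg htj, mul_zero]

/-- `diag(I_a, P_{n-a}[x])`. -/
def blockPascalMatrix (n a : ℕ) (x : ℝ) : Matrix (Fin (n + 1)) (Fin (n + 1)) ℝ :=
  lowerMatrix n fun i j => blockPascalCoeff a i j * x ^ (i - j)

lemma blockPascalMatrix_zero (n : ℕ) (x : ℝ) : blockPascalMatrix n 0 x = pascalMatrix n x := by
  simp [blockPascalMatrix, blockPascalCoeff, pascalMatrix_eq_binomialMatrix,
    binomialMatrix_eq_lowerMatrix]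

lemma blockPascalMatrix_self (n : ℕ) (x : ℝ) : blockPascalMatrix n n x = 1 := by
  ext i j
  simp only [blockPascalMatrix, lowerMatrix, blockPascalCoeff, Matrix.of_apply, Matrix.one_apply,
    Fin.ext_iff]
  have := i.is_le
  split_ifs <;> first | omega | simp_all

lemma Gmatrix_mul_blockPascalMatrix {n k : ℕ} (hk : k < n) (x : ℝ) :
    Gmatrix n (k + 1) x * blockPascalMatrix n (n - k) x = blockPascalMatrix n (n - (k + 1)) x := by
  rw [Gmatrix_eq_lowerMatrix, blockPascalMatrix, blockPascalMatrix, lowerMatrix_mul,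
    show n - k = n - (k + 1) + 1 by omega]
  ext i j
  simp only [lowerMatrix, Matrix.of_apply]
  split_ifs with h
  · rw [← sum_summationCoeff_mul_blockPascalCoeff _ h, sum_mul]
    refine sum_congr rfl fun t ht => ?_
    rw [mem_Icc] at ht
    rw [show (i : ℕ) - j = (i - t) + (t - j) by omega, pow_add]
    ring
  · rfl

lemma prod_ofFn_Gmatrix {n k : ℕ} (hk : k ≤ n) (x : ℝ) :
    (List.ofFn fun m : Fin k => Gmatrix n (k - m) x).prod = blockPascalMatrix n (n - k) x := by
  induction k with
  | zero => simp [blockPascalMatrix_self]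
  | succ k ih =>
    rw [List.ofFn_succ, List.prod_cons]
    simp only [Fin.val_zero, Fin.val_succ, Nat.sub_zero, Nat.add_sub_add_right]
    rw [ih (by omega), Gmatrix_mul_blockPascalMatrix (by omega)]

lemma Gprod_eq_pascalMatrix (n : ℕ) (x : ℝ) : Gprod n x = pascalMatrix n x := by
  rw [Gprod, prod_ofFn_Gmatrix le_rfl, Nat.sub_self, blockPascalMatrix_zero]

theorem euler_poly_matrix_summation_factorization_general (Eu : ℝ → ℕ → ℝ)
    (hEu : IsEulerFamily Eu) (n : ℕ) (x : ℝ) :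
    eulerMatrix Eu n (x + 1 / 2) = Gprod n x * eulerMatrix Eu n (1 / 2) ∧
    (eulerMatrix Eu n (x + 1 / 2) * (Dmatrix n * Gprod n (-x)) = 1 ∧
     (Dmatrix n * Gprod n (-x)) * eulerMatrix Eu n (x + 1 / 2) = 1) ∧
    eulerMatrix Eu n 0 = Gprod n (-(1 / 2)) * eulerMatrix Eu n (1 / 2) ∧
    (eulerMatrix Eu n 0 * (Dmatrix n * Gprod n (1 / 2)) = 1 ∧
     (Dmatrix n * Gprod n (1 / 2)) * eulerMatrix Eu n 0 = 1) := by
  have factor (y : ℝ) : eulerMatrix Eu n (y + 1 / 2) = Gprod n y * eulerMatrix Eu n (1 / 2) := by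
    rw [Gprod_eq_pascalMatrix, hEu.eulerMatrix_add]
  have inverse (y : ℝ) : eulerMatrix Eu n (y + 1 / 2) * (Dmatrix n * Gprod n (-y)) = 1 := by
    rw [factor, Gprod_eq_pascalMatrix, Gprod_eq_pascalMatrix, Matrix.mul_assoc,
      ← Matrix.mul_assoc (eulerMatrix Eu n _), hEu.eulerMatrix_half_mul_Dmatrix, Matrix.one_mul,
      pascalMatrix_mul, add_neg_cancel, pascalMatrix_zero]
  refine ⟨factor x, ⟨inverse x, mul_eq_one_comm.mp (inverse x)⟩, ?_, ?_, ?_⟩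
  · simpa only [neg_add_cancel] using factor (-(1 / 2))
  · simpa only [neg_add_cancel, neg_neg] using inverse (-(1 / 2))
  · simpa only [neg_add_cancel, neg_neg] using mul_eq_one_comm.mp (inverse (-(1 / 2)))

theorem euler_poly_matrix_summation_factorization (Eu : ℝ → ℕ → ℝ)
    (hEu : IsEulerFamily Eu) (n : ℕ) (hn : 1 ≤ n) (x : ℝ) :
    eulerMatrix Eu n (x + 1 / 2) = Gprod n x * eulerMatrix Eu n (1 / 2) ∧
    (eulerMatrix Eu n (x + 1 / 2) * (Dmatrix n * Gprod n (-x)) = 1 ∧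
     (Dmatrix n * Gprod n (-x)) * eulerMatrix Eu n (x + 1 / 2) = 1) ∧
    eulerMatrix Eu n 0 = Gprod n (-(1 / 2)) * eulerMatrix Eu n (1 / 2) ∧
    (eulerMatrix Eu n 0 * (Dmatrix n * Gprod n (1 / 2)) = 1 ∧
     (Dmatrix n * Gprod n (1 / 2)) * eulerMatrix Eu n 0 = 1) :=
  euler_poly_matrix_summation_factorization_general Eu hEu n x
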